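/- For $m > 2$ odd and $n \geq 1$, the non-commuting graph of the metacyclic group $M_{2mn} = \langle a,b : a^m = b^{2n} = 1, bab^{-1} = a^{-1}\rangle$ is the complete $(m+1)$-partite graph $K_{(m-1)n, n, n, \ldots, n}$ with $m$ parts of size $n$. -/

import Mathlib

/-- The non-commuting graph of a group. -/
def noncommGraph (G : Type*) [Group G] :
    SimpleGraph {g : G // g ∉ Subgroup.center G} where
  Adj u v := u.1 * v.1 ≠ v.1 * u.1
  symm := ⟨fun _ _ h e => h e.symm⟩
  loopless := ⟨fun _ h => h rfl⟩

/-- Relations of the metacyclic group `M_{2mn} = ⟨a, b : a^m = b^(2n) = 1, b a b⁻¹ = a⁻¹⟩`. -/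
def mRels (m n : ℕ) : Set (FreeGroup (Fin 2)) :=
  { (FreeGroup.of 0) ^ m, (FreeGroup.of 1) ^ (2 * n),
    FreeGroup.of 1 * FreeGroup.of 0 * (FreeGroup.of 1)⁻¹ * FreeGroup.of 0 }

/-!
`M_{2mn}` is the semidirect product `A ⋊ ℤ/2n` with `A = ℤ/m`, the generator of `ℤ/2n` acting by
inversion. For any commutative `A` without elements of order two, write elements as `(x, y)`.
The centre is `{(1, y) : y even}`. If `y, y'` are even, `(x, y)` and `(x', y')` commute; if `y` is
even and `y'` odd they commute only when `x² = 1`, i.e. `x = 1`; if both are odd they commute iff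
`(x x'⁻¹)² = 1`, i.e. `x = x'`. So commuting is an equivalence relation on the non-central
elements, with one class `{x ≠ 1, y even}` of size `(|A| - 1) n` and, for each `x ∈ A`, a class
`{(x, y) : y odd}` of size `n`; the non-commuting graph is complete multipartite on these classes.
The presentation of `M_{2mn}` and the universal property of the semidirect product give mutually
inverse homomorphisms between the two groups.
-/

open Multiplicative SemidirectProduct

lemma SimpleGraph.nonempty_iso_completeMultipartiteGraph_of_card {V ι : Type*} [Finite V]
    (Γ : SimpleGraph V) (p : V → ι) (hadj : ∀ u v, Γ.Adj u v ↔ p u ≠ p v) (c : ι → ℕ)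
    (hc : ∀ i, Nat.card {v // p v = i} = c i) :
    Nonempty (Γ ≃g SimpleGraph.completeMultipartiteGraph fun i => Fin (c i)) :=
  ⟨{ toEquiv := (Equiv.sigmaFiberEquiv p).symm.trans
        (Equiv.sigmaCongrRight fun i => Finite.equivFinOfCardEq (hc i))
     map_rel_iff' := (hadj _ _).symm }⟩

def MulEquiv.noncommGraphIso {G H : Type*} [Group G] [Group H] (e : G ≃* H) :
    noncommGraph G ≃g noncommGraph H where
  toEquiv := e.toEquiv.subtypeEquiv fun _ => (MulEquivClass.apply_mem_center_iff e).symm.not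
  map_rel_iff' {u v} := by
    change e u.1 * e v.1 ≠ e v.1 * e u.1 ↔ u.1 * v.1 ≠ v.1 * u.1
    rw [← map_mul, ← map_mul, e.injective.ne_iff]

lemma Nat.card_subtype_ne {α : Type*} [Finite α] (a : α) :
    Nat.card {x : α // x ≠ a} = Nat.card α - 1 := by
  have := Fintype.ofFinite α
  classical
  simp only [ne_eq, Nat.card_eq_fintype_card, Fintype.card_subtype_compl, Fintype.card_unique]

lemma ZMod.card_val_mod_two_eq (n : ℕ) [NeZero n] {r : ℕ} (hr : r < 2) :
    Nat.card {j : ZMod (2 * n) // j.val % 2 = r} = n := by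
  have hval (k : Fin n) : ((2 * k + r : ℕ) : ZMod (2 * n)).val = 2 * k + r :=
    ZMod.val_cast_of_lt (by omega)
  refine (Nat.card_congr ?_).trans (Nat.card_fin n)
  exact
    { toFun j := ⟨j.1.val / 2, by have := j.1.val_lt; omega⟩
      invFun k := ⟨(2 * k + r : ℕ), by rw [hval]; omega⟩
      left_inv j := Subtype.ext <| by
        have := j.2
        change ((2 * (j.1.val / 2) + r : ℕ) : ZMod (2 * n)) = j.1
        rw [show 2 * (j.1.val / 2) + r = j.1.val by omega, ZMod.natCast_zmod_val]
      right_inv k := Fin.ext <| by simp only [hval]; omega }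

section zmodLift

variable {H : Type*} [Group H] {k : ℕ}

def zmodLift (h : H) (hk : h ^ k = 1) : Multiplicative (ZMod k) →* H :=
  AddMonoidHom.toMultiplicativeLeft <| ZMod.lift k ⟨zmultiplesHom _ (Additive.ofMul h), by
    rw [zmultiplesHom_apply, natCast_zsmul, ← ofMul_pow, hk, ofMul_one]⟩

lemma zmodLift_ofAdd_intCast (h : H) (hk : h ^ k = 1) (i : ℤ) :
    zmodLift h hk (ofAdd (i : ZMod k)) = h ^ i := by
  change Additive.toMul (ZMod.lift k _ (i : ZMod k)) = _
  rw [ZMod.lift_coe]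
  rfl

lemma zmodLift_ofAdd_natCast (h : H) (hk : h ^ k = 1) (j : ℕ) :
    zmodLift h hk (ofAdd (j : ZMod k)) = h ^ j := by
  exact_mod_cast zmodLift_ofAdd_intCast h hk j

lemma zmodLift_ofAdd_one (h : H) (hk : h ^ k = 1) : zmodLift h hk (ofAdd 1) = h := by
  simpa using zmodLift_ofAdd_intCast h hk 1

lemma zmodLift_apply [NeZero k] (h : H) (hk : h ^ k = 1) (x : Multiplicative (ZMod k)) :
    zmodLift h hk x = h ^ (toAdd x).val := by
  rw [← zmodLift_ofAdd_natCast, ZMod.natCast_zmod_val, ofAdd_toAdd]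

lemma ofAdd_one_pow_self : ofAdd (1 : ZMod k) ^ k = 1 := by
  rw [← ofAdd_nsmul, nsmul_one, ZMod.natCast_self, ofAdd_zero]

lemma MonoidHom.ext_mzmod {f g : Multiplicative (ZMod k) →* H} (h : f (ofAdd 1) = g (ofAdd 1)) :
    f = g := by
  refine MonoidHom.ext fun x => ?_
  obtain ⟨i, rfl⟩ : ∃ i : ℤ, ofAdd (i : ZMod k) = x := ⟨ZMod.cast (toAdd x), by simp⟩
  rw [← mul_one (i : ZMod k), ← zsmul_eq_mul, ofAdd_zsmul, map_zpow, map_zpow, h]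

end zmodLift

lemma SemidirectProduct.commute_iff {N G : Type*} [Group N] [CommGroup G] {φ : G →* MulAut N}
    (g h : N ⋊[φ] G) : Commute g h ↔ g.left * φ g.right h.left = h.left * φ h.right g.left := by
  rw [Commute, SemiconjBy, SemidirectProduct.ext_iff]
  simp [mul_comm g.right]

lemma MulEquiv.inv_pow_apply {A : Type*} [CommGroup A] (k : ℕ) (x : A) :
    (MulEquiv.inv A ^ k) x = if k % 2 = 0 then x else x⁻¹ := by
  induction k with
  | zero => simp
  | succ k ih =>
    rw [pow_succ', MulAut.mul_apply, ih]
    split_ifs <;> first | omega | simp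

lemma eq_one_of_sq_eq_one_of_odd_card {A : Type*} [Group A] (hA : Odd (Nat.card A)) {x : A}
    (hx : x ^ 2 = 1) : x = 1 :=
  (powCoprime (Nat.coprime_two_right.mpr hA)).injective (by simp [powCoprime, hx])

lemma eq_inv_iff_eq_one_of_sq {A : Type*} [Group A] (h2 : ∀ x : A, x ^ 2 = 1 → x = 1) {x : A} :
    x = x⁻¹ ↔ x = 1 := by
  refine ⟨fun hx => h2 x ?_, fun hx => by simp [hx]⟩
  rw [sq, ← eq_inv_iff_mul_eq_one]
  exact hx

section

variable (A : Type*) [CommGroup A] (n : ℕ)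

def invAction : Multiplicative (ZMod (2 * n)) →* MulAut A :=
  zmodLift (MulEquiv.inv A) (by ext x; simp [MulEquiv.inv_pow_apply])

abbrev InvSemidirect := A ⋊[invAction A n] Multiplicative (ZMod (2 * n))

variable {A n}

lemma invAction_ofAdd_one : invAction A n (ofAdd 1) = MulEquiv.inv A :=
  zmodLift_ofAdd_one _ _

lemma invAction_apply [NeZero n] (y : Multiplicative (ZMod (2 * n))) (x : A) :
    invAction A n y x = if (toAdd y).val % 2 = 0 then x else x⁻¹ := by
  rw [invAction, zmodLift_apply, MulEquiv.inv_pow_apply]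

lemma invAction_lift_compat [NeZero n] {H : Type*} [Group H] (f : A →* H) (b : H)
    (hb : b ^ (2 * n) = 1) (hf : ∀ x, b * f x * b⁻¹ = f x⁻¹) (y : Multiplicative (ZMod (2 * n))) :
    f.comp (invAction A n y).toMonoidHom = (MulAut.conj (zmodLift b hb y)).toMonoidHom.comp f := by
  have hpow (k : ℕ) (x : A) : b ^ k * f x * (b ^ k)⁻¹ = f ((MulEquiv.inv A ^ k) x) := by
    induction k generalizing x with
    | zero => simp
    | succ k ih =>
      rw [pow_succ', pow_succ', MulAut.mul_apply, MulEquiv.inv_apply, ← hf, ← ih]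
      group
  ext x
  simp only [MonoidHom.comp_apply, MulEquiv.coe_toMonoidHom, invAction, zmodLift_apply,
    ← hpow, MulAut.conj_apply]

namespace InvSemidirect

def commClass (g : InvSemidirect A n) : Option A :=
  if (toAdd g.right).val % 2 = 0 then none else some g.left

lemma commClass_eq_none_iff (g : InvSemidirect A n) :
    commClass g = none ↔ (toAdd g.right).val % 2 = 0 := by
  unfold commClass
  split_ifs <;> simp_all

lemma commClass_eq_some_iff (g : InvSemidirect A n) (x : A) :
    commClass g = some x ↔ (toAdd g.right).val % 2 = 1 ∧ g.left = x := by
  unfold commClass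
  split_ifs <;> simp_all

variable [NeZero n] [Nontrivial A] (h2 : ∀ x : A, x ^ 2 = 1 → x = 1)
include h2

lemma mem_center_iff (g : InvSemidirect A n) :
    g ∈ Subgroup.center (InvSemidirect A n) ↔ g.left = 1 ∧ (toAdd g.right).val % 2 = 0 := by
  have : Fact (1 < 2 * n) := ⟨by have := NeZero.pos n; omega⟩
  constructor
  · intro hg
    have hleft : g.left = 1 := by
      have : Commute g (inr (ofAdd 1)) := (Subgroup.mem_center_iff.mp hg _).symm
      rw [SemidirectProduct.commute_iff] at this
      exact (eq_inv_iff_eq_one_of_sq h2).mp (by simpa [invAction_ofAdd_one] using this)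
    refine ⟨hleft, ?_⟩
    obtain ⟨x, hx⟩ := exists_ne (1 : A)
    have : Commute g (inl x) := (Subgroup.mem_center_iff.mp hg _).symm
    rw [SemidirectProduct.commute_iff, invAction_apply] at this
    by_contra hodd
    simp only [hleft, hodd, if_false, one_mul, map_one, mul_one] at this
    exact hx ((eq_inv_iff_eq_one_of_sq h2).mp this.symm)
  · rintro ⟨hleft, heven⟩
    refine Subgroup.mem_center_iff.mpr fun h => (?_ : Commute h g)
    rw [SemidirectProduct.commute_iff, invAction_apply, invAction_apply]
    simp [hleft, heven]

lemma commute_iff_commClass_eq {g h : InvSemidirect A n}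
    (hg : g ∉ Subgroup.center _) (hh : h ∉ Subgroup.center _) :
    Commute g h ↔ commClass g = commClass h := by
  rw [mem_center_iff h2] at hg hh
  rw [SemidirectProduct.commute_iff, invAction_apply, invAction_apply, commClass, commClass]
  split_ifs with hge hhe hhe
  · simp [mul_comm]
  · refine iff_of_false (fun e => hg ⟨(eq_inv_iff_eq_one_of_sq h2).mp ?_, hge⟩) nofun
    rw [mul_comm] at e
    exact mul_left_cancel e
  · refine iff_of_false (fun e => hh ⟨(eq_inv_iff_eq_one_of_sq h2).mp ?_, hhe⟩) nofun
    rw [mul_comm h.left] at e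
    exact (mul_left_cancel e).symm
  · have hinv : h.left * g.left⁻¹ = (g.left * h.left⁻¹)⁻¹ := by rw [mul_inv_rev, inv_inv]
    rw [hinv, eq_inv_iff_eq_one_of_sq h2, mul_inv_eq_one, Option.some_inj]

lemma card_commClass_eq_none [Finite A] :
    Nat.card {v : {g : InvSemidirect A n // g ∉ Subgroup.center _} // commClass v.1 = none} =
      (Nat.card A - 1) * n := by
  refine (Nat.card_congr (β := {a : A // a ≠ 1} × {j : ZMod (2 * n) // j.val % 2 = 0})
    { toFun v := (⟨v.1.1.left, fun h => v.1.2 <| (mem_center_iff h2 _).mpr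
          ⟨h, (commClass_eq_none_iff _).mp v.2⟩⟩,
        ⟨toAdd v.1.1.right, (commClass_eq_none_iff _).mp v.2⟩)
      invFun p := ⟨⟨⟨p.1, ofAdd p.2.1⟩, fun hc => p.1.2 ((mem_center_iff h2 _).mp hc).1⟩,
        (commClass_eq_none_iff _).mpr p.2.2⟩
      left_inv _ := rfl
      right_inv _ := rfl }).trans ?_
  rw [Nat.card_prod, Nat.card_subtype_ne, ZMod.card_val_mod_two_eq n zero_lt_two]

lemma card_commClass_eq_some (x : A) :
    Nat.card {v : {g : InvSemidirect A n // g ∉ Subgroup.center _} // commClass v.1 = some x} =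
      n :=
  (Nat.card_congr (β := {j : ZMod (2 * n) // j.val % 2 = 1})
    { toFun v := ⟨toAdd v.1.1.right, ((commClass_eq_some_iff _ _).mp v.2).1⟩
      invFun j := ⟨⟨⟨x, ofAdd j.1⟩,
        fun hc => zero_ne_one <| by exact ((mem_center_iff h2 _).mp hc).2.symm.trans j.2⟩,
        by exact (commClass_eq_some_iff _ _).mpr ⟨j.2, rfl⟩⟩
      left_inv v := Subtype.ext <| Subtype.ext <|
        SemidirectProduct.ext ((commClass_eq_some_iff _ _).mp v.2).2.symm rfl
      right_inv _ := rfl }).trans (ZMod.card_val_mod_two_eq n one_lt_two)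

theorem nonempty_noncommGraph_iso [Finite A] {ι : Type*} [DecidableEq ι]
    (τ : ι ≃ Option A) (i₀ : ι) (hi₀ : τ i₀ = none) :
    Nonempty (noncommGraph (InvSemidirect A n) ≃g SimpleGraph.completeMultipartiteGraph
      fun i : ι => Fin (if i = i₀ then (Nat.card A - 1) * n else n)) := by
  have : Finite (InvSemidirect A n) := Finite.of_equiv _ SemidirectProduct.equivProd.symm
  refine SimpleGraph.nonempty_iso_completeMultipartiteGraph_of_card _
    (fun v => τ.symm (commClass v.1)) (fun u v => ?_) _ fun i => ?_
  · exact (commute_iff_commClass_eq h2 u.2 v.2).not.trans τ.symm.injective.ne_iff.symm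
  · rw [Nat.card_congr (Equiv.subtypeEquivRight fun v => τ.symm_apply_eq)]
    split_ifs with hi
    · rw [hi, hi₀, card_commClass_eq_none h2]
    · obtain ⟨x, hx⟩ := Option.ne_none_iff_exists'.mp (hi₀ ▸ τ.injective.ne hi)
      rw [hx, card_commClass_eq_some h2]

end InvSemidirect

end

section Presentation

variable (m n : ℕ)

local notation "P" => PresentedGroup (mRels m n)

lemma mRels_of_zero_pow : (PresentedGroup.of 0 : P) ^ m = 1 :=
  (map_pow (PresentedGroup.mk _) _ _).symm.trans (PresentedGroup.one_of_mem (by simp [mRels]))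

lemma mRels_of_one_pow : (PresentedGroup.of 1 : P) ^ (2 * n) = 1 :=
  (map_pow (PresentedGroup.mk _) _ _).symm.trans (PresentedGroup.one_of_mem (by simp [mRels]))

lemma mRels_conj :
    (PresentedGroup.of 1 : P) * PresentedGroup.of 0 * (PresentedGroup.of 1)⁻¹ =
      (PresentedGroup.of 0)⁻¹ := by
  rw [← mul_eq_one_iff_eq_inv]
  have h := PresentedGroup.one_of_mem (rels := mRels m n)
    (x := FreeGroup.of 1 * FreeGroup.of 0 * (FreeGroup.of 1)⁻¹ * FreeGroup.of 0) (by simp [mRels])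
  simp only [map_mul, map_inv] at h
  exact h

lemma mRels_conj_zmodLift (x : Multiplicative (ZMod m)) :
    PresentedGroup.of 1 * zmodLift _ (mRels_of_zero_pow m n) x * (PresentedGroup.of 1)⁻¹ =
      zmodLift _ (mRels_of_zero_pow m n) x⁻¹ :=
  DFunLike.congr_fun (MonoidHom.ext_mzmod
    (f := (MulAut.conj (PresentedGroup.of 1)).toMonoidHom.comp (zmodLift _ (mRels_of_zero_pow m n)))
    (g := (zmodLift _ (mRels_of_zero_pow m n)).comp (MulEquiv.inv _).toMonoidHom)
    (by simp [zmodLift_ofAdd_one, mRels_conj])) x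

def toInvSemidirect : P →* InvSemidirect (Multiplicative (ZMod m)) n :=
  PresentedGroup.toGroup (f := ![inl (ofAdd 1), inr (ofAdd 1)]) <| by
    rintro r (rfl | rfl | rfl) <;>
      simp only [map_pow, map_mul, map_inv, FreeGroup.lift_apply_of, Matrix.cons_val_zero,
        Matrix.cons_val_one]
    · rw [← map_pow, ofAdd_one_pow_self, map_one]
    · rw [← map_pow, ofAdd_one_pow_self, map_one]
    · rw [← map_inv, ← inl_aut, invAction_ofAdd_one, MulEquiv.inv_apply, ← map_mul, inv_mul_cancel,
        map_one]

def ofInvSemidirect [NeZero n] : InvSemidirect (Multiplicative (ZMod m)) n →* P :=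
  SemidirectProduct.lift (zmodLift _ (mRels_of_zero_pow m n)) (zmodLift _ (mRels_of_one_pow m n))
    (invAction_lift_compat _ _ _ (mRels_conj_zmodLift m n))

def presentedEquiv [NeZero n] : P ≃* InvSemidirect (Multiplicative (ZMod m)) n :=
  MonoidHom.toMulEquiv (toInvSemidirect m n) (ofInvSemidirect m n)
    (PresentedGroup.ext fun i => by
      fin_cases i <;> simp [toInvSemidirect, ofInvSemidirect, zmodLift_ofAdd_one])
    (SemidirectProduct.hom_ext
      (MonoidHom.ext_mzmod (by simp [toInvSemidirect, ofInvSemidirect, zmodLift_ofAdd_one]))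
      (MonoidHom.ext_mzmod (by simp [toInvSemidirect, ofInvSemidirect, zmodLift_ofAdd_one])))

end Presentation

/-- For `m > 2` odd and `n ≥ 1`, the non-commuting graph of the metacyclic group `M_{2mn}`
is the complete `(m+1)`-partite graph `K_{(m-1)n,n,…,n}` with `m` parts of size `n`. -/
theorem noncommGraph_metacyclic_odd (m n : ℕ) (hm : 2 < m) (hodd : Odd m) (hn : 1 ≤ n) :
    Nonempty (noncommGraph (PresentedGroup (mRels m n)) ≃g
      SimpleGraph.completeMultipartiteGraph
        fun i : Fin (m + 1) => Fin (if i = 0 then (m - 1) * n else n)) := by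
  have : NeZero n := ⟨by omega⟩
  have : Fact (1 < m) := ⟨by omega⟩
  have hcard : Nat.card (Multiplicative (ZMod m)) = m := by simp
  let τ : Fin (m + 1) ≃ Option (Multiplicative (ZMod m)) :=
    (finSuccEquiv m).trans (Equiv.optionCongr ((ZMod.finEquiv m).toEquiv.trans ofAdd))
  obtain ⟨f⟩ := InvSemidirect.nonempty_noncommGraph_iso (n := n)
    (fun _ => eq_one_of_sq_eq_one_of_odd_card (by rwa [hcard])) τ 0 (by simp [τ])
  rw [hcard] at f
  exact ⟨(presentedEquiv m n).noncommGraphIso.trans f⟩
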